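/- arXiv:1308.3307 — 2 statements merged into one kernel-verified Lean document; each statement's English description precedes it below -/
import Mathlib

section
/- Let f : ℝⁿ → ℝ be a Borel measurable level convex function. Then f is strictly level convex if and only if f(∫_Ω φ dμ) < μ-ess sup_{x∈Ω} f(φ(x)) for every probability measure μ on ℝⁿ supported on an open set Ω ⊆ ℝ^d and every φ ∈ L¹_μ(Ω; ℝⁿ) that is not μ-a.e. constant. -/
/-!
If `f` is strictly level convex and `φ` is not a.e. constant, split the domain into a set and its
complement on which `φ` has different averages. The mean `∫ φ` lies strictly between the two
averages, and both lie in the sublevel set `{f ≤ m}`, `m` the essential supremum of `f ∘ φ`, which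
is convex; strict level convexity then gives `f (∫ φ) < m`. This sublevel set need not be closed,
so the usual Jensen argument does not place the averages in it. In finite dimension it does hold:
if the barycenter were outside a convex set carrying the measure, a nonzero functional separating
them would be constant a.e., so the measure would live on a hyperplane of lower dimension.

Conversely, the two-point law `t δ_ξ + (1 - t) δ_η` turns the strict supremal Jensen inequality
into `f (t ξ + (1 - t) η) < max (f ξ) (f η)`.
-/

open Set MeasureTheory

/-- A function on `ℝⁿ` is *level convex* if
`f (t ξ + (1-t) η) ≤ max (f ξ) (f η)` for all `ξ, η` and `t ∈ [0,1]`. -/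
def LevelConvex {n : ℕ} (f : EuclideanSpace ℝ (Fin n) → ℝ) : Prop :=
  ∀ ξ η : EuclideanSpace ℝ (Fin n), ∀ t ∈ Set.Icc (0 : ℝ) 1,
    f (t • ξ + (1 - t) • η) ≤ max (f ξ) (f η)

/-- A function on `ℝⁿ` is *strictly level convex* if it is level convex and
`f (t ξ + (1-t) η) < max (f ξ) (f η)` for every `t ∈ (0,1)` and all `ξ ≠ η`. -/
def StrictLevelConvex {n : ℕ} (f : EuclideanSpace ℝ (Fin n) → ℝ) : Prop :=
  LevelConvex f ∧
    ∀ ξ η : EuclideanSpace ℝ (Fin n), ξ ≠ η → ∀ t ∈ Set.Ioo (0 : ℝ) 1,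
      f (t • ξ + (1 - t) • η) < max (f ξ) (f η)

section TwoPoint

variable {α : Type*} [MeasurableSpace α]

noncomputable def twoPointMeasure (a b : α) (t : ℝ) : Measure α :=
  ENNReal.ofReal t • Measure.dirac a + ENNReal.ofReal (1 - t) • Measure.dirac b

variable {a b : α} {t : ℝ}

theorem isProbabilityMeasure_twoPointMeasure (ht : t ∈ Icc (0 : ℝ) 1) :
    IsProbabilityMeasure (twoPointMeasure a b t) := by
  constructor
  simp [twoPointMeasure, ← ENNReal.ofReal_add ht.1 (sub_nonneg.2 ht.2)]

variable [MeasurableSingletonClass α]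

theorem ae_twoPointMeasure_iff (ht : t ∈ Ioo (0 : ℝ) 1) {p : α → Prop} :
    (∀ᵐ x ∂twoPointMeasure a b t, p x) ↔ p a ∧ p b := by
  simp [twoPointMeasure, ht.1, ht.2, ae_dirac_eq]

theorem not_ae_eq_const_twoPointMeasure {β : Type*} (ht : t ∈ Ioo (0 : ℝ) 1) {g : α → β}
    (hg : g a ≠ g b) : ¬ ∃ z, g =ᵐ[twoPointMeasure a b t] fun _ => z := fun ⟨_, hz⟩ =>
  let ⟨hza, hzb⟩ := (ae_twoPointMeasure_iff ht).1 hz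
  hg (hza.trans hzb.symm)

theorem essSup_twoPointMeasure_le {β : Type*} [CompleteLinearOrder β] (ht : t ∈ Ioo (0 : ℝ) 1)
    (g : α → β) : essSup g (twoPointMeasure a b t) ≤ max (g a) (g b) :=
  essSup_le_of_ae_le _ <| (ae_twoPointMeasure_iff ht).2 ⟨le_max_left .., le_max_right ..⟩

theorem integrable_twoPointMeasure {E : Type*} [NormedAddCommGroup E] (g : α → E) :
    Integrable g (twoPointMeasure a b t) :=
  ((integrable_dirac enorm_lt_top).smul_measure ENNReal.ofReal_ne_top).add_measure
    ((integrable_dirac enorm_lt_top).smul_measure ENNReal.ofReal_ne_top)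

theorem integral_twoPointMeasure {E : Type*} [NormedAddCommGroup E] [NormedSpace ℝ E]
    [CompleteSpace E] (ht : t ∈ Icc (0 : ℝ) 1) (g : α → E) :
    ∫ x, g x ∂twoPointMeasure a b t = t • g a + (1 - t) • g b := by
  rw [twoPointMeasure, integral_add_measure, integral_smul_measure, integral_smul_measure,
    integral_dirac, integral_dirac, ENNReal.toReal_ofReal ht.1,
    ENNReal.toReal_ofReal (sub_nonneg.2 ht.2)]
  all_goals exact (integrable_dirac enorm_lt_top).smul_measure ENNReal.ofReal_ne_top

end TwoPoint

section Barycenter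

variable {E : Type*} [NormedAddCommGroup E] [NormedSpace ℝ E] [FiniteDimensional ℝ E]

theorem Convex.exists_ne_zero_forall_le_of_notMem {s : Set E} (hs : Convex ℝ s)
    (hne : s.Nonempty) {b : E} (hb : b ∉ s) :
    ∃ ℓ : StrongDual ℝ E, ℓ ≠ 0 ∧ ∀ x ∈ s, ℓ x ≤ ℓ b := by
  by_cases hint : (interior s).Nonempty
  · obtain ⟨ℓ, u, hℓ, hℓs, hℓb⟩ := geometric_hahn_banach_of_nonempty_interior hs
      (convex_singleton b) (disjoint_singleton_right.2 fun h => hb (interior_subset h)) hint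
      (singleton_nonempty b)
    exact ⟨ℓ, hℓ, fun x hx => (hℓs x hx).trans (hℓb b rfl)⟩
  obtain ⟨x₀, hx₀⟩ := hne
  have hspan : vectorSpan ℝ s < ⊤ := by
    rwa [lt_top_iff_ne_top, Ne,
      ← AffineSubspace.affineSpan_eq_top_iff_vectorSpan_eq_top_of_nonempty ℝ E E ⟨x₀, hx₀⟩,
      ← hs.interior_nonempty_iff_affineSpan_eq_top]
  obtain ⟨ℓ, hℓ, hker⟩ := (vectorSpan ℝ s).exists_le_ker_of_lt_top hspan
  have hconst : ∀ x ∈ s, ℓ x = ℓ x₀ := fun x hx =>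
    sub_eq_zero.1 (by simpa using hker (vsub_mem_vectorSpan ℝ hx hx₀))
  rcases le_total (ℓ x₀) (ℓ b) with h | h
  · refine ⟨LinearMap.toContinuousLinearMap ℓ, by simpa using hℓ, fun x hx => ?_⟩
    simpa [hconst x hx] using h
  · refine ⟨-LinearMap.toContinuousLinearMap ℓ, by simpa using hℓ, fun x hx => ?_⟩
    simpa [hconst x hx] using h

variable {α : Type*} [MeasurableSpace α] {μ : Measure α}

theorem Convex.integral_mem_of_finiteDimensional [IsProbabilityMeasure μ] {s : Set E}
    (hs : Convex ℝ s) {g : α → E} (hgs : ∀ᵐ x ∂μ, g x ∈ s) (hgi : Integrable g μ) :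
    ∫ x, g x ∂μ ∈ s := by
  induction hk : Module.finrank ℝ E using Nat.strong_induction_on generalizing E with
  | _ k ih =>
  set b := ∫ x, g x ∂μ
  by_contra hb
  obtain ⟨ℓ, hℓ, hℓs⟩ :=
    hs.exists_ne_zero_forall_le_of_notMem (hgs.exists.elim fun x hx => ⟨g x, hx⟩) hb
  -- `ℓ ∘ g ≤ ℓ b` with equal means, so `g - b` lies a.e. in `ker ℓ`, where induction applies
  have hℓg : ∀ᵐ x ∂μ, ℓ (g x) = ℓ b := by
    refine (integral_eq_iff_of_ae_le (ℓ.integrable_comp hgi) (integrable_const (ℓ b))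
      (hgs.mono fun x hx => hℓs _ hx)).1 ?_
    simp [ℓ.integral_comp_comm hgi, b]
  set K := LinearMap.ker (ℓ : E →ₗ[ℝ] ℝ)
  have hK : Module.finrank ℝ K < k := by
    refine hk ▸ Submodule.finrank_lt fun h => hℓ ?_
    ext x
    exact (h ▸ Submodule.mem_top : x ∈ K)
  obtain ⟨P, hP⟩ := Submodule.ClosedComplemented.of_finiteDimensional K
  set g' : α → K := fun x => P (g x - b)
  have hg'i : Integrable g' μ := P.integrable_comp (hgi.sub (integrable_const b))
  have hg' : ∫ x, g' x ∂μ = 0 := by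
    have := P.integral_comp_comm (hgi.sub (integrable_const b))
    simp only [Pi.sub_apply] at this
    rw [this, integral_sub hgi (integrable_const b)]
    simp [b]
  have hg's : ∀ᵐ x ∂μ, g' x ∈ K.subtype ⁻¹' ((· + b) ⁻¹' s) := by
    filter_upwards [hgs, hℓg] with x hxs hxℓ
    have hxK : g x - b ∈ K := by simp [K, hxℓ]
    have hg'x : g' x = ⟨g x - b, hxK⟩ := hP ⟨_, hxK⟩
    simpa [hg'x] using hxs
  have := ih _ hK ((hs.translate_preimage_left b).linear_preimage K.subtype) hg's hg'i rfl
  simp only [hg', mem_preimage, Submodule.coe_subtype, ZeroMemClass.coe_zero, zero_add] at this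
  exact hb this

theorem Convex.set_average_mem_of_finiteDimensional {s : Set E} (hs : Convex ℝ s) {t : Set α}
    (h0 : μ t ≠ 0) (ht : μ t ≠ ⊤) {g : α → E} (hgs : ∀ᵐ x ∂μ.restrict t, g x ∈ s)
    (hgi : IntegrableOn g t μ) : ⨍ x in t, g x ∂μ ∈ s :=
  have := Fact.mk ht.lt_top
  have := NeZero.mk h0
  hs.integral_mem_of_finiteDimensional (Measure.smul_absolutelyContinuous.ae_le hgs)
    hgi.to_average

end Barycenter

section LevelConvex

variable {n : ℕ} {f : EuclideanSpace ℝ (Fin n) → ℝ}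

theorem LevelConvex.convex_setOf_le (hf : LevelConvex f) (m : ℝ) : Convex ℝ {ξ | f ξ ≤ m} := by
  intro ξ hξ η hη a b ha hb hab
  obtain rfl : b = 1 - a := by linarith
  exact (hf ξ η a ⟨ha, by linarith⟩).trans (max_le hξ hη)

theorem StrictLevelConvex.lt_max_of_mem_openSegment (hf : StrictLevelConvex f)
    {ξ η ζ : EuclideanSpace ℝ (Fin n)} (hξη : ξ ≠ η) (hζ : ζ ∈ openSegment ℝ ξ η) :
    f ζ < max (f ξ) (f η) := by
  obtain ⟨a, b, ha, hb, hab, rfl⟩ := hζ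
  obtain rfl : b = 1 - a := by linarith
  exact hf.2 ξ η hξη a ⟨ha, by linarith⟩

theorem StrictLevelConvex.map_integral_lt_of_ae_le (hf : StrictLevelConvex f) {α : Type*}
    [MeasurableSpace α] {μ : Measure α} [IsProbabilityMeasure μ]
    {φ : α → EuclideanSpace ℝ (Fin n)} (hφ : Integrable φ μ)
    (hne : ¬ ∃ z, φ =ᵐ[μ] fun _ => z) {m : ℝ} (hm : ∀ᵐ x ∂μ, f (φ x) ≤ m) :
    f (∫ x, φ x ∂μ) < m := by
  obtain ⟨t, ht, h0, h0c, hne⟩ :=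
    (ae_eq_const_or_exists_average_ne_compl hφ).resolve_left fun h => hne ⟨_, h⟩
  have hle : ∀ u, μ u ≠ 0 → f (⨍ x in u, φ x ∂μ) ≤ m := fun u hu =>
    (hf.1.convex_setOf_le m).set_average_mem_of_finiteDimensional hu (measure_ne_top μ u)
      (ae_restrict_of_ae hm) hφ.integrableOn
  rw [← average_eq_integral]
  calc f (⨍ x, φ x ∂μ)
      < max (f (⨍ x in t, φ x ∂μ)) (f (⨍ x in tᶜ, φ x ∂μ)) :=
        hf.lt_max_of_mem_openSegment hne
          (average_mem_openSegment_compl_self ht.nullMeasurableSet h0 h0c hφ)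
    _ ≤ m := max_le (hle t h0) (hle tᶜ h0c)

end LevelConvex

theorem strictLevelConvex_iff_strict_supremal_jensen_general {n : ℕ}
    (f : EuclideanSpace ℝ (Fin n) → ℝ)
    (hlc : LevelConvex f) :
    StrictLevelConvex f ↔
      ∀ (d : ℕ) (Ω : Set (EuclideanSpace ℝ (Fin d)))
        (μ : Measure (EuclideanSpace ℝ (Fin d))),
        IsOpen Ω → IsProbabilityMeasure μ → μ Ωᶜ = 0 →
        ∀ φ : EuclideanSpace ℝ (Fin d) → EuclideanSpace ℝ (Fin n),
          Integrable φ μ →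
          ¬ (∃ z : EuclideanSpace ℝ (Fin n), φ =ᵐ[μ] fun _ => z) →
          (f (∫ x, φ x ∂μ) : EReal) < essSup (fun x => (f (φ x) : EReal)) μ := by
  constructor
  · intro hslc d Ω μ _ hμ _ φ hφ hne
    by_contra! hle
    have hm : ∀ᵐ x ∂μ, f (φ x) ≤ f (∫ x, φ x ∂μ) :=
      (ae_le_essSup (f := fun x => (f (φ x) : EReal))).mono fun _ hx =>
        EReal.coe_le_coe_iff.1 (hx.trans hle)
    exact (hslc.map_integral_lt_of_ae_le hφ hne hm).false
  · intro h
    refine ⟨hlc, fun ξ η hξη t ht => ?_⟩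
    obtain ⟨a, b, hab⟩ := exists_pair_ne (EuclideanSpace ℝ (Fin 1))
    let φ := Function.update (fun _ => η) a ξ
    have hφa : φ a = ξ := Function.update_self ..
    have hφb : φ b = η := Function.update_of_ne hab.symm ..
    have := isProbabilityMeasure_twoPointMeasure (a := a) (b := b) (Ioo_subset_Icc_self ht)
    have hlt := h 1 univ _ isOpen_univ this (by simp) φ (integrable_twoPointMeasure φ)
      (not_ae_eq_const_twoPointMeasure ht (by rwa [hφa, hφb]))
    have hsup := essSup_twoPointMeasure_le (a := a) (b := b) ht fun x => (f (φ x) : EReal)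
    rw [integral_twoPointMeasure (Ioo_subset_Icc_self ht), hφa, hφb] at hlt
    simp only [hφa, hφb, ← EReal.coe_strictMono.monotone.map_max] at hsup
    exact EReal.coe_lt_coe_iff.1 (hlt.trans_le hsup)

/-- A Borel measurable level convex `f : ℝⁿ → ℝ` is strictly level convex if and only if
`f (∫_Ω φ dμ) < μ-ess sup_{x ∈ Ω} f (φ x)` for every probability measure `μ` supported on
an open set `Ω ⊆ ℝ^d` and every `φ ∈ L¹_μ(Ω; ℝⁿ)` which is not `μ`-a.e. constant. -/
theorem strictLevelConvex_iff_strict_supremal_jensen {n : ℕ}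
    (f : EuclideanSpace ℝ (Fin n) → ℝ) (hf : Measurable f)
    (hlc : LevelConvex f) :
    StrictLevelConvex f ↔
      ∀ (d : ℕ) (Ω : Set (EuclideanSpace ℝ (Fin d)))
        (μ : Measure (EuclideanSpace ℝ (Fin d))),
        IsOpen Ω → IsProbabilityMeasure μ → μ Ωᶜ = 0 →
        ∀ φ : EuclideanSpace ℝ (Fin d) → EuclideanSpace ℝ (Fin n),
          Integrable φ μ →
          ¬ (∃ z : EuclideanSpace ℝ (Fin n), φ =ᵐ[μ] fun _ => z) →
          (f (∫ x, φ x ∂μ) : EReal) < essSup (fun x => (f (φ x) : EReal)) μ :=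
  strictLevelConvex_iff_strict_supremal_jensen_general f hlc
end

section
/- Let f : ℝⁿ → ℝ be a level convex function and ξ₀ ∈ ℝⁿ. Assume that for every t ∈ (0,1) and every ξ ∈ ℝⁿ with ξ ≠ ξ₀, f(tξ₀ + (1-t)ξ) < max{f(ξ₀), f(ξ)}. Then f is strictly level convex at ξ₀, i.e. for every t ∈ (0,1) and all ξ, η ∈ ℝⁿ with ξ ≠ η and ξ₀ = tξ + (1-t)η, one has f(ξ₀) < max{f(ξ), f(η)}. -/
open Set

/-- Let `f : ℝⁿ → ℝ` be level convex and `ξ₀ ∈ ℝⁿ`. If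
`f (t ξ₀ + (1-t) ξ) < max (f ξ₀) (f ξ)` for every `t ∈ (0,1)` and every `ξ ≠ ξ₀`,
then `f` is strictly level convex at `ξ₀`: for every `t ∈ (0,1)` and all `ξ ≠ η` with
`ξ₀ = t ξ + (1-t) η`, one has `f ξ₀ < max (f ξ) (f η)`. -/
theorem strictLevelConvexAt_of_endpoint_condition {n : ℕ}
    (f : EuclideanSpace ℝ (Fin n) → ℝ) (hf : LevelConvex f)
    (ξ₀ : EuclideanSpace ℝ (Fin n))
    (h : ∀ t ∈ Set.Ioo (0 : ℝ) 1, ∀ ξ : EuclideanSpace ℝ (Fin n), ξ ≠ ξ₀ →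
      f (t • ξ₀ + (1 - t) • ξ) < max (f ξ₀) (f ξ)) :
    ∀ t ∈ Set.Ioo (0 : ℝ) 1, ∀ ξ η : EuclideanSpace ℝ (Fin n), ξ ≠ η →
      ξ₀ = t • ξ + (1 - t) • η → f ξ₀ < max (f ξ) (f η) := by
  rintro t ⟨ht0, ht1⟩ ξ η hne heq
  have h1t : (1 : ℝ) - t ≠ 0 := by linarith
  have ht' : t ≠ 0 := ne_of_gt ht0
  have hξ : ξ ≠ ξ₀ := by
    rintro rfl
    apply hne
    have h2 : (1 - t) • ξ = (1 - t) • η := by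
      linear_combination (norm := module) heq
    exact smul_right_injective _ h1t h2
  have hη : η ≠ ξ₀ := by
    rintro rfl
    apply hne
    have h2 : t • ξ = t • η := by
      linear_combination (norm := module) (-1 : ℝ) • heq
    exact (smul_right_injective _ ht' h2).symm ▸ rfl
  by_contra hc
  push_neg at hc
  have hle : f ξ₀ ≤ max (f ξ) (f η) := by
    rw [heq]; exact hf ξ η t ⟨le_of_lt ht0, le_of_lt ht1⟩
  have hM : f ξ₀ = max (f ξ) (f η) := le_antisymm hle hc
  have hfξ : f ξ ≤ f ξ₀ := hM ▸ le_max_left _ _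
  have hfη : f η ≤ f ξ₀ := hM ▸ le_max_right _ _
  have hζ : f ((1/2 : ℝ) • ξ₀ + (1 - 1/2 : ℝ) • ξ) < f ξ₀ := by
    have := h (1/2) ⟨by norm_num, by norm_num⟩ ξ hξ
    rwa [max_eq_left hfξ] at this
  have hζ' : f ((1/2 : ℝ) • ξ₀ + (1 - 1/2 : ℝ) • η) < f ξ₀ := by
    have := h (1/2) ⟨by norm_num, by norm_num⟩ η hη
    rwa [max_eq_left hfη] at this
  have hmid : ξ₀ = t • ((1/2 : ℝ) • ξ₀ + (1 - 1/2 : ℝ) • ξ)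
      + (1 - t) • ((1/2 : ℝ) • ξ₀ + (1 - 1/2 : ℝ) • η) := by
    linear_combination (norm := module) (1/2 : ℝ) • heq
  have := hf ((1/2 : ℝ) • ξ₀ + (1 - 1/2 : ℝ) • ξ)
      ((1/2 : ℝ) • ξ₀ + (1 - 1/2 : ℝ) • η) t ⟨le_of_lt ht0, le_of_lt ht1⟩
  rw [← hmid] at this
  have := lt_of_le_of_lt this (max_lt hζ hζ')
  exact lt_irrefl _ this
end
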